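/- For any parameter sequence (N_k), for every k ≥ 1, setting β = 2^{3ℓ_k}, every equilibrium state μ for βφ_X satisfies μ(Y_k) > 1 − 2^{−ℓ_k}, where Y_k = {x ∈ {0,1}^ℕ : x|_{[i, i+ℓ_k−1]} ∈ L_k for some i ∈ {0,…,ℓ_k−1}}. -/

import Mathlib

/-!
Compare an equilibrium state `μ` with the uniform measures on long periodic orbits shadowing a
point of `X`: their entropy is `≥ 0` and `∫ φ_X ≥ -1/P`, while every measure has entropy `≤ 1`,
so `β ∫ d(·, X) dμ ≤ 1`. Every point of `X` is cut into `L_k`-words of length `ℓ_k`, so a point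
outside `Y_k` differs from each point of `X` within its first `2ℓ_k` symbols and lies at
distance `≥ 2^{1-2ℓ_k}` from `X`; Markov's inequality then bounds `μ(Y_kᶜ)` by `2^{-ℓ_k-1}`.
`X` is nonempty: the words `c_k` are nested, and their common extension is a concatenation of
`L_j`-words for every `j`.
-/

open MeasureTheory Filter Topology
open scoped ENNReal Classical

noncomputable section

/-- The configuration space `{0,1}^ℕ` (with `false = 0`, `true = 1`). -/
abbrev Conf : Type := ℕ → Bool

/-- The shift map `(Tx)(n) = x(n+1)`. -/
def shiftMap (x : Conf) : Conf := fun n => x (n + 1)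

/-- The metric `d(x,y) = 2^{-min{n : x n ≠ y n}}` for `x ≠ y`, and `d(x,x) = 0`. -/
def dist01 (x y : Conf) : ℝ :=
  if x = y then 0 else ((2 : ℝ) ^ sInf {n : ℕ | x n ≠ y n})⁻¹

/-- A subshift: a nonempty, closed, shift-invariant subset of `{0,1}^ℕ`. -/
def IsSubshift (X : Set Conf) : Prop :=
  X.Nonempty ∧ IsClosed X ∧ ∀ x ∈ X, shiftMap x ∈ X

/-- The potential `φ_X(y) = -d(y, X) = -inf {d(y,x) : x ∈ X}`. -/
def phiX (X : Set Conf) (y : Conf) : ℝ := -sInf (dist01 y '' X)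

/-- The cylinder set of points whose first `n` symbols form the word `w`. -/
def cylinder {n : ℕ} (w : Fin n → Bool) : Set Conf := {x | ∀ i : Fin n, x i = w i}

/-- The entropy `H_n(μ)` of the `n`-block marginal of `μ` (base-2 logarithm). -/
def Hblock (μ : Measure Conf) (n : ℕ) : ℝ :=
  -∑ w : Fin n → Bool, (μ (cylinder w)).toReal * Real.logb 2 (μ (cylinder w)).toReal

/-- The Kolmogorov–Sinai entropy `h(μ) = lim_n H_n(μ)/n`; since the limit exists
(by subadditivity) for shift-invariant measures, we may define it as a `limsup`. -/
def entropy (μ : Measure Conf) : ℝ :=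
  limsup (fun n : ℕ => Hblock μ n / n) atTop

/-- A shift-invariant Borel probability measure. -/
def IsInvProb (μ : Measure Conf) : Prop :=
  IsProbabilityMeasure μ ∧ μ.map shiftMap = μ

/-- An equilibrium state for `βφ`: a shift-invariant Borel probability measure maximizing
`ν ↦ β∫φ dν + h(ν)` over all shift-invariant Borel probability measures. -/
def IsEquilibriumState (φ : Conf → ℝ) (β : ℝ) (μ : Measure Conf) : Prop :=
  IsInvProb μ ∧ ∀ ν : Measure Conf, IsInvProb ν →
    β * ∫ x, φ x ∂ν + entropy ν ≤ β * ∫ x, φ x ∂μ + entropy μ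

/-- The set of all concatenations of `m` words from `S`. -/
def tupleConcat (S : Finset (List Bool)) : ℕ → Finset (List Bool)
  | 0 => {([] : List Bool)}
  | m + 1 => (S ×ˢ tupleConcat S m).image fun p => p.1 ++ p.2

/-- `A_0 = {00000, 01000}` (with `false = 0`, `true = 1`). -/
def Azero : Finset (List Bool) :=
  {[false, false, false, false, false], [false, true, false, false, false]}

/-- `B_0 = {11111, 10111}`. -/
def Bzero : Finset (List Bool) :=
  {[true, true, true, true, true], [true, false, true, true, true]}

/-- The inductive construction: `consAB N k = (ℓ_k, A_k, B_k)`.  At step `k ≥ 1`,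
`c_k` is the concatenation, in lexicographic order, of all words in
`(A_{k-1} ∪ B_{k-1})^{2^{ℓ_{k-1}}+1}`; if `k` is odd, `A_k = {c_k a^{N_k} : a ∈ A_{k-1}}`
and `B_k = {c_k b_1 ⋯ b_{N_k} : b_i ∈ B_{k-1}}`, and symmetrically if `k` is even. -/
def consAB (N : ℕ → ℕ) : ℕ → ℕ × Finset (List Bool) × Finset (List Bool)
  | 0 => (5, Azero, Bzero)
  | k + 1 =>
    let ℓ := (consAB N k).1
    let A := (consAB N k).2.1
    let B := (consAB N k).2.2
    let c : List Bool := ((tupleConcat (A ∪ B) (2 ^ ℓ + 1)).sort (· ≤ ·)).flatten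
    let n := N (k + 1)
    if k % 2 = 0 then -- `k + 1` is odd
      (c.length + n * ℓ,
        A.image fun a => c ++ (List.replicate n a).flatten,
        (tupleConcat B n).image fun w => c ++ w)
    else -- `k + 1` is even
      (c.length + n * ℓ,
        (tupleConcat A n).image fun w => c ++ w,
        B.image fun b => c ++ (List.replicate n b).flatten)

/-- The common length `ℓ_k` of the words of `A_k ∪ B_k`. -/
def ell (N : ℕ → ℕ) (k : ℕ) : ℕ := (consAB N k).1

/-- The set of words `A_k`. -/
def Ak (N : ℕ → ℕ) (k : ℕ) : Finset (List Bool) := (consAB N k).2.1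

/-- The set of words `B_k`. -/
def Bk (N : ℕ → ℕ) (k : ℕ) : Finset (List Bool) := (consAB N k).2.2

/-- `L_k = A_k ∪ B_k`. -/
def Lk (N : ℕ → ℕ) (k : ℕ) : Finset (List Bool) := Ak N k ∪ Bk N k

/-- The frequency `f_0(u)` of the symbol `0` in the word `u`. -/
def freq0 (u : List Bool) : ℝ := (u.count false : ℝ) / u.length

/-- `z` is an infinite concatenation of words from `L`. -/
def IsConcat (L : Finset (List Bool)) (z : Conf) : Prop :=
  ∃ w : ℕ → List Bool, (∀ i, w i ∈ L ∧ w i ≠ []) ∧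
    ∀ (i j : ℕ) (h : j < (w i).length),
      z ((∑ r ∈ Finset.range i, (w r).length) + j) = (w i).get ⟨j, h⟩

/-- `⟨L⟩`: the subshift of all shifts of infinite concatenations of words from `L`. -/
def langShift (L : Finset (List Bool)) : Set Conf :=
  {y | ∃ (n : ℕ) (z : Conf), IsConcat L z ∧ y = fun m => z (m + n)}

/-- The subshift `X = ⋂_{k ≥ 1} ⟨L_k⟩`. -/
def Xsub (N : ℕ → ℕ) : Set Conf := ⋂ k : ℕ, langShift (Lk N (k + 1))

/-- The word `x|_{[i, i+ℓ)}` read off from `x ∈ {0,1}^ℕ`. -/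
def windowWord (x : Conf) (i ℓ : ℕ) : List Bool := List.ofFn fun j : Fin ℓ => x (i + j)

/-- The set `Y_k` of points containing a word of `L_k` starting at some
position `i ∈ {0, …, ℓ_k - 1}`. -/
def Yset (N : ℕ → ℕ) (k : ℕ) : Set Conf :=
  {x | ∃ i < ell N k, windowWord x i (ell N k) ∈ Lk N k}


lemma dist01_nonneg (x y : Conf) : 0 ≤ dist01 x y := by
  unfold dist01; split_ifs <;> positivity

lemma dist01_self (x : Conf) : dist01 x x = 0 := if_pos rfl

lemma dist01_comm (x y : Conf) : dist01 x y = dist01 y x := by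
  simp only [dist01, eq_comm (a := x), ne_comm (a := x _)]

lemma exists_dist01_eq {x y : Conf} (h : x ≠ y) : ∃ n, x n ≠ y n ∧ dist01 x y = (2 ^ n)⁻¹ :=
  ⟨_, Nat.sInf_mem (Function.ne_iff.mp h), if_neg h⟩

lemma dist01_le_of_eqOn {x y : Conf} {m : ℕ} (h : ∀ j < m, x j = y j) :
    dist01 x y ≤ (2 ^ m)⁻¹ := by
  by_cases hxy : x = y
  · rw [hxy, dist01_self]; positivity
  obtain ⟨n, hn, hd⟩ := exists_dist01_eq hxy
  have hmn : m ≤ n := not_lt.mp fun hnm => hn (h n hnm)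
  rw [hd]
  exact inv_anti₀ (by positivity) (pow_le_pow_right₀ one_le_two hmn)

lemma inv_two_pow_le_dist01 {x y : Conf} {j : ℕ} (h : x j ≠ y j) : (2 ^ j)⁻¹ ≤ dist01 x y := by
  have hxy : x ≠ y := fun e => h (congrFun e j)
  rw [dist01, if_neg hxy]
  exact inv_anti₀ (by positivity) (pow_le_pow_right₀ one_le_two (Nat.sInf_le h))

lemma dist01_triangle (x y z : Conf) : dist01 x z ≤ dist01 x y + dist01 y z := by
  by_cases hxz : x = z
  · rw [hxz, dist01_self]; exact add_nonneg (dist01_nonneg _ _) (dist01_nonneg _ _)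
  obtain ⟨n, hn, hd⟩ := exists_dist01_eq hxz
  rw [hd]
  by_cases hxy : x n = y n
  · exact (inv_two_pow_le_dist01 (hxy ▸ hn)).trans (le_add_of_nonneg_left (dist01_nonneg _ _))
  · exact (inv_two_pow_le_dist01 hxy).trans (le_add_of_nonneg_right (dist01_nonneg _ _))

section phiX

variable {X : Set Conf}

lemma neg_dist01_le_phiX {x y : Conf} (hy : y ∈ X) : -dist01 x y ≤ phiX X x :=
  neg_le_neg (csInf_le ⟨0, by rintro _ ⟨z, -, rfl⟩; exact dist01_nonneg x z⟩ ⟨y, hy, rfl⟩)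

lemma phiX_le_neg (hX : X.Nonempty) {x : Conf} {t : ℝ} (h : ∀ y ∈ X, t ≤ dist01 x y) :
    phiX X x ≤ -t :=
  neg_le_neg (le_csInf (hX.image _) (by rintro _ ⟨y, hy, rfl⟩; exact h y hy))

lemma phiX_nonpos (hX : X.Nonempty) (x : Conf) : phiX X x ≤ 0 := by
  simpa using phiX_le_neg hX fun y _ => dist01_nonneg x y

lemma phiX_le_add_dist01 (hX : X.Nonempty) (x y : Conf) :
    phiX X x ≤ phiX X y + dist01 x y := by
  have h := phiX_le_neg hX (x := x) (t := -phiX X y - dist01 x y) fun z hz => by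
    have := neg_dist01_le_phiX (x := y) hz
    have := dist01_triangle y x z
    rw [dist01_comm y x] at this
    linarith
  linarith

lemma continuous_phiX (hX : X.Nonempty) : Continuous (phiX X) := by
  refine continuous_iff_continuousAt.mpr fun x => Metric.tendsto_nhds.mpr fun ε hε => ?_
  obtain ⟨m, hm⟩ : ∃ m : ℕ, ((2 : ℝ) ^ m)⁻¹ < ε := by
    simpa [← inv_pow] using exists_pow_lt_of_lt_one hε (by norm_num : (1 / 2 : ℝ) < 1)
  have hcoord : ∀ j, ∀ᶠ y in 𝓝 x, y j = x j := fun j =>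
    tendsto_pure.mp (nhds_discrete Bool ▸ (continuous_apply j).tendsto x)
  filter_upwards [(Finset.range m).eventually_all.mpr fun j _ => hcoord j] with y hy
  have hyx : dist01 y x ≤ (2 ^ m)⁻¹ := dist01_le_of_eqOn fun j hj => hy j (Finset.mem_range.mpr hj)
  rw [Real.dist_eq, abs_sub_lt_iff]
  have := phiX_le_add_dist01 hX y x
  have := phiX_le_add_dist01 hX x y
  rw [dist01_comm] at this
  constructor <;> linarith

end phiX

lemma Real.sum_negMulLog_le_log_card {ι : Type*} [Fintype ι] {p : ι → ℝ} (hp0 : ∀ i, 0 ≤ p i)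
    (hp1 : ∑ i, p i = 1) : ∑ i, Real.negMulLog (p i) ≤ Real.log (Fintype.card ι) := by
  have hι : 0 < (Fintype.card ι : ℝ) := by
    rcases isEmpty_or_nonempty ι with h | h
    · simp at hp1
    · exact_mod_cast Fintype.card_pos
  have hJ := Real.concaveOn_negMulLog.le_map_sum (t := Finset.univ) (p := p)
    (w := fun _ => (Fintype.card ι : ℝ)⁻¹) (fun _ _ => by positivity)
    (by simp [Finset.card_univ, hι.ne']) (fun i _ => Set.mem_Ici.mpr (hp0 i))
  simp only [smul_eq_mul, ← Finset.mul_sum, hp1, mul_one] at hJ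
  rw [Real.negMulLog, Real.log_inv] at hJ
  have := mul_le_mul_of_nonneg_left hJ hι.le
  field_simp at this
  linarith

lemma measurableSet_cylinder {n : ℕ} (w : Fin n → Bool) : MeasurableSet (cylinder w) := by
  have : cylinder w = ⋂ i : Fin n, (fun x : Conf => x i) ⁻¹' {w i} := by
    ext x; simp [_root_.cylinder]
  rw [this]
  exact .iInter fun i => measurable_pi_apply _ (measurableSet_singleton _)

lemma measureReal_cylinder_sum (μ : Measure Conf) [IsProbabilityMeasure μ] (n : ℕ) :
    ∑ w : Fin n → Bool, μ.real (cylinder w) = 1 := by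
  have hdisj : Pairwise (Function.onFun Disjoint fun w : Fin n → Bool => cylinder w) :=
    fun w w' hww => Set.disjoint_left.mpr fun x hx hx' =>
      hww (funext fun i => (hx i).symm.trans (hx' i))
  have hcover : ⋃ w : Fin n → Bool, cylinder w = Set.univ :=
    Set.eq_univ_of_forall fun x => Set.mem_iUnion.mpr ⟨fun i => x i, fun _ => rfl⟩
  rw [← measureReal_iUnion_fintype hdisj (fun w => measurableSet_cylinder w), hcover, probReal_univ]

lemma Hblock_eq_sum_negMulLog (μ : Measure Conf) (n : ℕ) :
    Hblock μ n = (∑ w : Fin n → Bool, Real.negMulLog (μ.real (cylinder w))) / Real.log 2 := by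
  simp only [Hblock, Real.negMulLog, Real.logb, ← measureReal_def, neg_mul,
    Finset.sum_neg_distrib, neg_div, Finset.sum_div, mul_div_assoc]

section entropy

variable (μ : Measure Conf) [IsProbabilityMeasure μ]

lemma Hblock_nonneg (n : ℕ) : 0 ≤ Hblock μ n := by
  rw [Hblock_eq_sum_negMulLog]
  exact div_nonneg (Finset.sum_nonneg fun w _ =>
    Real.negMulLog_nonneg measureReal_nonneg measureReal_le_one) (Real.log_nonneg one_le_two)

lemma Hblock_le (n : ℕ) : Hblock μ n ≤ n := by
  rw [Hblock_eq_sum_negMulLog, div_le_iff₀ (Real.log_pos one_lt_two)]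
  calc _ ≤ Real.log (Fintype.card (Fin n → Bool)) :=
        Real.sum_negMulLog_le_log_card (fun _ => measureReal_nonneg) (measureReal_cylinder_sum μ n)
    _ = n * Real.log 2 := by simp [Real.log_pow]

lemma Hblock_div_mem_Icc (n : ℕ) : Hblock μ n / n ∈ Set.Icc (0 : ℝ) 1 :=
  ⟨div_nonneg (Hblock_nonneg μ n) n.cast_nonneg,
    div_le_one_of_le₀ (Hblock_le μ n) n.cast_nonneg⟩

lemma entropy_nonneg : 0 ≤ entropy μ :=
  le_limsup_of_frequently_le (.of_forall fun n => (Hblock_div_mem_Icc μ n).1)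
    (isBoundedUnder_of_eventually_le (.of_forall fun n => (Hblock_div_mem_Icc μ n).2))

lemma entropy_le_one : entropy μ ≤ 1 :=
  limsup_le_of_le
    (isCoboundedUnder_le_of_eventually_le _ (.of_forall fun n => (Hblock_div_mem_Icc μ n).1))
    (.of_forall fun n => (Hblock_div_mem_Icc μ n).2)

end entropy

lemma shiftMap_iterate_apply (x : Conf) (m n : ℕ) : shiftMap^[m] x n = x (n + m) := by
  induction m generalizing x with
  | zero => rfl
  | succ m ih => rw [Function.iterate_succ_apply, ih]; rfl

lemma measurable_shiftMap : Measurable shiftMap :=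
  measurable_pi_lambda _ fun n => measurable_pi_apply (n + 1)

lemma integrable_of_continuous (μ : Measure Conf) [IsFiniteMeasure μ] {f : Conf → ℝ}
    (hf : Continuous f) : Integrable f μ :=
  hf.integrable_of_hasCompactSupport (HasCompactSupport.of_compactSpace f)

def orbitMeasure (p : Conf) (P : ℕ) : Measure Conf :=
  (P : ℝ≥0∞)⁻¹ • ∑ i ∈ Finset.range P, Measure.dirac (shiftMap^[i] p)

lemma isInvProb_orbitMeasure {p : Conf} {P : ℕ} (hP : 0 < P) (hp : shiftMap^[P] p = p) :
    IsInvProb (orbitMeasure p P) := by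
  refine ⟨⟨?_⟩, ?_⟩
  · simp [orbitMeasure, ENNReal.inv_mul_cancel (Nat.cast_ne_zero.mpr hP.ne')]
  · obtain ⟨Q, rfl⟩ := Nat.exists_eq_succ_of_ne_zero hP.ne'
    have hsum : ∑ i ∈ Finset.range (Q + 1), Measure.dirac (shiftMap^[i + 1] p) =
        ∑ i ∈ Finset.range (Q + 1), Measure.dirac (shiftMap^[i] p) := by
      rw [Finset.sum_range_succ, hp, Finset.sum_range_succ' _ Q, Function.iterate_zero, id]
    simp only [orbitMeasure, Measure.map_smul,
      Measure.map_finset_sum measurable_shiftMap.aemeasurable,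
      Measure.map_dirac' measurable_shiftMap, ← Function.iterate_succ_apply' shiftMap, hsum]

lemma integral_orbitMeasure {p : Conf} {P : ℕ} {f : Conf → ℝ} (hf : Continuous f) :
    ∫ x, f x ∂orbitMeasure p P = (P : ℝ)⁻¹ * ∑ i ∈ Finset.range P, f (shiftMap^[i] p) := by
  rw [orbitMeasure, integral_smul_measure,
    integral_finsetSum_measure fun i _ => integrable_of_continuous _ hf]
  simp [integral_dirac]

def periodize (x : Conf) (P : ℕ) : Conf := fun n => x (n % P)

lemma shiftMap_iterate_periodize (x : Conf) (P : ℕ) :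
    shiftMap^[P] (periodize x P) = periodize x P :=
  funext fun n => by simp only [shiftMap_iterate_apply, periodize, Nat.add_mod_right]

lemma dist01_shiftMap_iterate_periodize_le (x : Conf) {P i : ℕ} :
    dist01 (shiftMap^[i] (periodize x P)) (shiftMap^[i] x) ≤ (2 ^ (P - i))⁻¹ :=
  dist01_le_of_eqOn fun j hj => by
    simp only [shiftMap_iterate_apply, periodize, Nat.mod_eq_of_lt (by omega : j + i < P)]

lemma sum_range_inv_two_pow_sub_le_one (P : ℕ) :
    ∑ i ∈ Finset.range P, ((2 : ℝ) ^ (P - i))⁻¹ ≤ 1 := by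
  rw [← Finset.sum_range_reflect]
  calc ∑ j ∈ Finset.range P, ((2 : ℝ) ^ (P - (P - 1 - j)))⁻¹
        = 2⁻¹ * ∑ j ∈ Finset.range P, (1 / 2 : ℝ) ^ j := by
          rw [Finset.mul_sum]
          refine Finset.sum_congr rfl fun j hj => ?_
          rw [show P - (P - 1 - j) = j + 1 by have := Finset.mem_range.mp hj; omega]
          simp [pow_succ, mul_comm]
    _ ≤ 2⁻¹ * 2 := by gcongr; exact sum_geometric_two_le P
    _ = 1 := by norm_num

lemma exists_isInvProb_integral_phiX_ge {X : Set Conf} (hX : Set.MapsTo shiftMap X X) {x : Conf}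
    (hx : x ∈ X) {P : ℕ} (hP : 0 < P) :
    ∃ ν, IsInvProb ν ∧ -(P : ℝ)⁻¹ ≤ ∫ y, phiX X y ∂ν := by
  refine ⟨orbitMeasure (periodize x P) P,
    isInvProb_orbitMeasure hP (shiftMap_iterate_periodize x P), ?_⟩
  rw [integral_orbitMeasure (continuous_phiX ⟨x, hx⟩)]
  have hterm : ∀ i ∈ Finset.range P,
      -((2 : ℝ) ^ (P - i))⁻¹ ≤ phiX X (shiftMap^[i] (periodize x P)) := fun i _ =>
    (neg_le_neg (dist01_shiftMap_iterate_periodize_le x)).trans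
      (neg_dist01_le_phiX (hX.iterate i hx))
  calc -(P : ℝ)⁻¹ ≤ (P : ℝ)⁻¹ * -∑ i ∈ Finset.range P, ((2 : ℝ) ^ (P - i))⁻¹ := by
        have := sum_range_inv_two_pow_sub_le_one P
        rw [mul_neg, neg_le_neg_iff]
        exact mul_le_of_le_one_right (by positivity) this
    _ ≤ _ := by
        rw [← Finset.sum_neg_distrib]
        exact mul_le_mul_of_nonneg_left (Finset.sum_le_sum hterm) (by positivity)

lemma neg_one_le_mul_integral_phiX {X : Set Conf} (hX : Set.MapsTo shiftMap X X)
    (hXne : X.Nonempty) {β : ℝ} (hβ : 0 ≤ β) {μ : Measure Conf}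
    (hμ : IsEquilibriumState (phiX X) β μ) : -1 ≤ β * ∫ x, phiX X x ∂μ := by
  obtain ⟨⟨hμprob, -⟩, hmax⟩ := hμ
  obtain ⟨x, hx⟩ := hXne
  have hbound : ∀ P : ℕ, 0 < P → -1 - β / P ≤ β * ∫ y, phiX X y ∂μ := fun P hP => by
    obtain ⟨ν, hν, hνφ⟩ := exists_isInvProb_integral_phiX_ge hX hx hP
    have := hν.1
    have hβν : -(β / P) ≤ β * ∫ y, phiX X y ∂ν := by
      rw [div_eq_mul_inv, ← mul_neg]; exact mul_le_mul_of_nonneg_left hνφ hβ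
    linarith [hmax ν hν, entropy_nonneg ν, entropy_le_one μ]
  have hlim : Tendsto (fun P : ℕ => -1 - β / P) atTop (𝓝 (-1)) := by
    simpa using tendsto_const_nhds.sub (tendsto_const_div_atTop_nhds_zero_nat β)
  exact le_of_tendsto hlim (eventually_atTop.mpr ⟨1, hbound⟩)

section Words

open Computability

lemma take_drop_mem_of_mem_kstar {α : Type*} {l : Language α} {ℓ : ℕ} (hℓ : 0 < ℓ)
    (hl : ∀ w ∈ l, w.length = ℓ) {u : List α} (hu : u ∈ l∗) {i : ℕ}
    (hi : (i + 1) * ℓ ≤ u.length) : (u.drop (i * ℓ)).take ℓ ∈ l := by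
  obtain ⟨L, rfl, hL⟩ := hu
  induction L generalizing i with
  | nil => simp at hi; nlinarith
  | cons v L ih =>
    have hv : v.length = ℓ := hl v (hL v List.mem_cons_self)
    rw [List.flatten_cons] at hi ⊢
    cases i with
    | zero => simpa [List.take_left' hv] using hL v List.mem_cons_self
    | succ i =>
      rw [show (i + 1) * ℓ = v.length + i * ℓ by rw [hv]; ring, ← List.drop_drop,
        List.drop_left]
      exact ih (fun w hw => hL w (List.mem_cons_of_mem v hw))
        (by rw [List.length_append, hv] at hi; nlinarith)

lemma exists_mem_prefix_flatten_sort {T : Finset (List Bool)} (hT : T.Nonempty) :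
    ∃ u ∈ T, u <+: (T.sort (· ≤ ·)).flatten := by
  obtain ⟨v, hv⟩ := hT
  obtain ⟨u, tl, hcons⟩ := List.exists_cons_of_ne_nil
    (List.ne_nil_of_mem ((Finset.mem_sort (· ≤ ·)).mpr hv))
  refine ⟨u, (Finset.mem_sort (· ≤ ·)).mp (hcons ▸ List.mem_cons_self), ?_⟩
  rw [hcons, List.flatten_cons]
  exact List.prefix_append _ _

def wordLang (S : Finset (List Bool)) : Language Bool := (S : Set (List Bool))

variable {S : Finset (List Bool)}

lemma length_of_mem_tupleConcat {ℓ : ℕ} (hS : ∀ v ∈ S, v.length = ℓ) :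
    ∀ {m : ℕ} {u : List Bool}, u ∈ tupleConcat S m → u.length = m * ℓ
  | 0, u, hu => by simp_all [tupleConcat]
  | m + 1, u, hu => by
    simp only [tupleConcat, Finset.mem_image, Finset.mem_product] at hu
    obtain ⟨⟨a, b⟩, ⟨ha, hb⟩, rfl⟩ := hu
    simp [hS a ha, length_of_mem_tupleConcat hS hb, add_mul, add_comm]

lemma mem_kstar_of_mem_tupleConcat :
    ∀ {m : ℕ} {u : List Bool}, u ∈ tupleConcat S m → u ∈ (wordLang S)∗
  | 0, u, hu => by simp_all [tupleConcat, Language.nil_mem_kstar]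
  | m + 1, u, hu => by
    simp only [tupleConcat, Finset.mem_image, Finset.mem_product] at hu
    obtain ⟨⟨a, b⟩, ⟨ha, hb⟩, rfl⟩ := hu
    exact (mul_kstar_le_kstar (a := wordLang S))
      (Language.append_mem_mul ha (mem_kstar_of_mem_tupleConcat hb))

lemma tupleConcat_mono {T : Finset (List Bool)} (hST : S ⊆ T) :
    ∀ {m : ℕ}, tupleConcat S m ⊆ tupleConcat T m
  | 0 => subset_rfl
  | _ + 1 => Finset.image_subset_image (Finset.product_subset_product hST (tupleConcat_mono hST))

lemma flatten_replicate_mem_tupleConcat {a : List Bool} (ha : a ∈ S) :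
    ∀ m, (List.replicate m a).flatten ∈ tupleConcat S m
  | 0 => Finset.mem_singleton_self _
  | m + 1 => Finset.mem_image.mpr
      ⟨(a, _), Finset.mem_product.mpr ⟨ha, flatten_replicate_mem_tupleConcat ha m⟩, rfl⟩

lemma tupleConcat_nonempty (hS : S.Nonempty) : ∀ m, (tupleConcat S m).Nonempty
  | 0 => Finset.singleton_nonempty _
  | m + 1 => ((hS.product (tupleConcat_nonempty hS m)).image _)

end Words

section Windows

variable {L : Finset (List Bool)} {ℓ : ℕ}

lemma length_windowWord (x : Conf) (i ℓ : ℕ) : (windowWord x i ℓ).length = ℓ :=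
  List.length_ofFn

lemma windowWord_congr {x y : Conf} {i ℓ : ℕ} (h : ∀ j < i + ℓ, x j = y j) :
    windowWord x i ℓ = windowWord y i ℓ :=
  congrArg List.ofFn (funext fun j => h _ (by omega))

lemma windowWord_eq_take_drop {x : Conf} {u : List Bool}
    (hx : ∀ n (hn : n < u.length), x n = u[n]) {i ℓ : ℕ} (h : i + ℓ ≤ u.length) :
    windowWord x i ℓ = (u.drop i).take ℓ :=
  List.ext_getElem (by simp [windowWord]; omega) fun j h₁ _ => by
    simp only [windowWord, List.getElem_ofFn, List.getElem_take, List.getElem_drop]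
    exact hx _ _

lemma windowWord_mem_of_isConcat (hL : ∀ w ∈ L, w.length = ℓ) {z : Conf} (hz : IsConcat L z)
    (r : ℕ) : windowWord z (r * ℓ) ℓ ∈ L := by
  obtain ⟨w, hw, hzw⟩ := hz
  have hsum : ∑ s ∈ Finset.range r, (w s).length = r * ℓ := by
    simp [hL _ (hw _).1]
  convert (hw r).1 using 1
  refine List.ext_getElem (by simp [windowWord, hL _ (hw r).1]) fun j hj _ => ?_
  simpa [windowWord, hsum] using hzw r j (by simpa [hL _ (hw r).1, windowWord] using hj)

lemma isConcat_of_windowWord_mem (hℓ : 0 < ℓ) {z : Conf}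
    (h : ∀ r, windowWord z (r * ℓ) ℓ ∈ L) : IsConcat L z := by
  refine ⟨fun r => windowWord z (r * ℓ) ℓ, fun r => ⟨h r, ?_⟩, fun r j hj => ?_⟩
  · rw [← List.length_pos_iff, length_windowWord]; exact hℓ
  · simp [windowWord]

lemma exists_windowWord_mem_of_mem_langShift (hℓ : 0 < ℓ) (hL : ∀ w ∈ L, w.length = ℓ)
    {y : Conf} (hy : y ∈ langShift L) : ∃ i < ℓ, windowWord y i ℓ ∈ L := by
  obtain ⟨n, z, hz, rfl⟩ := hy
  -- the next block boundary after `n` is at `m * ℓ` with `m = ⌈n / ℓ⌉`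
  obtain ⟨m, i, hi, hmi⟩ : ∃ m i, i < ℓ ∧ i + n = m * ℓ := by
    have := Nat.div_add_mod (n + ℓ - 1) ℓ
    have := Nat.mod_lt (n + ℓ - 1) hℓ
    exact ⟨(n + ℓ - 1) / ℓ, (n + ℓ - 1) / ℓ * ℓ - n, by grind, by grind⟩
  refine ⟨i, hi, ?_⟩
  have : windowWord (fun k => z (k + n)) i ℓ = windowWord z (m * ℓ) ℓ := by
    simp only [windowWord, ← hmi, Nat.add_right_comm]
  exact this ▸ windowWord_mem_of_isConcat hL hz m

end Windows

section Construction

open Computability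

variable (N : ℕ → ℕ)

/-- `cword N k` is the connecting word `c_{k+1}`, built from the words of `L_k`. -/
def cword (k : ℕ) : List Bool :=
  ((tupleConcat (Lk N k) (2 ^ ell N k + 1)).sort (· ≤ ·)).flatten

lemma ell_succ (k : ℕ) : ell N (k + 1) = (cword N k).length + N (k + 1) * ell N k := by
  by_cases h : k % 2 = 0 <;> simp [ell, consAB, cword, Lk, Ak, Bk, h]

variable {N}

lemma mem_Lk_succ {k : ℕ} {w : List Bool} (hw : w ∈ Lk N (k + 1)) :
    ∃ t ∈ tupleConcat (Lk N k) (N (k + 1)), w = cword N k ++ t := by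
  have hA : Ak N k ⊆ Lk N k := Finset.subset_union_left
  have hB : Bk N k ⊆ Lk N k := Finset.subset_union_right
  by_cases h : k % 2 = 0 <;>
    simp only [Lk, Ak, Bk, consAB, h, if_true, if_false, Finset.mem_union,
      Finset.mem_image] at hw <;>
    obtain ⟨a, ha, rfl⟩ | ⟨a, ha, rfl⟩ := hw
  · exact ⟨_, flatten_replicate_mem_tupleConcat (hA ha) _, rfl⟩
  · exact ⟨_, tupleConcat_mono hB ha, rfl⟩
  · exact ⟨_, tupleConcat_mono hA ha, rfl⟩
  · exact ⟨_, flatten_replicate_mem_tupleConcat (hB ha) _, rfl⟩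

lemma length_of_mem_Lk : ∀ {k : ℕ}, ∀ w ∈ Lk N k, w.length = ell N k
  | 0, w, hw => by
    have : w ∈ Azero ∪ Bzero := hw
    fin_cases this <;> rfl
  | k + 1, w, hw => by
    obtain ⟨t, ht, rfl⟩ := mem_Lk_succ hw
    rw [List.length_append, length_of_mem_tupleConcat length_of_mem_Lk ht, ell_succ]

variable (N) in
lemma Lk_nonempty (k : ℕ) : (Lk N k).Nonempty := by
  suffices (Ak N k).Nonempty from this.mono Finset.subset_union_left
  induction k with
  | zero => exact ⟨_, Finset.mem_insert_self _ _⟩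
  | succ k ih =>
    by_cases h : k % 2 = 0 <;> simp only [Ak, consAB, h, if_true, if_false]
    · exact ih.image _
    · exact (tupleConcat_nonempty ih _).image _

lemma cword_mem_kstar (k : ℕ) : cword N k ∈ (wordLang (Lk N k))∗ :=
  kstar_idem (wordLang (Lk N k)) ▸ Language.join_mem_kstar fun _ hu =>
    mem_kstar_of_mem_tupleConcat ((Finset.mem_sort _).mp hu)

lemma wordLang_Lk_succ_le_kstar (k : ℕ) : wordLang (Lk N (k + 1)) ≤ (wordLang (Lk N k))∗ := by
  intro w hw
  obtain ⟨t, ht, rfl⟩ := mem_Lk_succ hw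
  exact kstar_mul_kstar (wordLang (Lk N k)) ▸
    Language.append_mem_mul (cword_mem_kstar k) (mem_kstar_of_mem_tupleConcat ht)

lemma antitone_kstar_wordLang_Lk : Antitone fun k => (wordLang (Lk N k))∗ :=
  antitone_nat_of_succ_le fun k =>
    kstar_idem (wordLang (Lk N k)) ▸ kstar_mono (wordLang_Lk_succ_le_kstar k)

lemma le_length_cword (k : ℕ) : (2 ^ ell N k + 1) * ell N k ≤ (cword N k).length := by
  obtain ⟨u, hu, hpre⟩ := exists_mem_prefix_flatten_sort
    (tupleConcat_nonempty (Lk_nonempty N k) (2 ^ ell N k + 1))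
  exact length_of_mem_tupleConcat length_of_mem_Lk hu ▸ hpre.length_le

lemma lt_ell (k : ℕ) : k < ell N k := by
  induction k with
  | zero => exact Nat.succ_pos 4
  | succ k ih =>
    have := le_length_cword (N := N) k
    have := Nat.one_le_two_pow (n := ell N k)
    rw [ell_succ]
    nlinarith

lemma ell_lt_length_cword (k : ℕ) : ell N k < (cword N k).length := by
  have := le_length_cword (N := N) k
  have := lt_ell (N := N) k
  have := Nat.one_le_two_pow (n := ell N k)
  nlinarith

end Construction

section LimitPoint

variable {N : ℕ → ℕ}

lemma ell_pos (k : ℕ) : 0 < ell N k := (Nat.zero_le k).trans_lt (lt_ell k)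

lemma cword_prefix_of_mem_Lk_succ {k : ℕ} {w : List Bool} (hw : w ∈ Lk N (k + 1)) :
    cword N k <+: w := by
  obtain ⟨t, -, rfl⟩ := mem_Lk_succ hw
  exact List.prefix_append _ _

lemma cword_prefix_cword_succ (k : ℕ) : cword N k <+: cword N (k + 1) := by
  obtain ⟨u, hu, hpre⟩ := exists_mem_prefix_flatten_sort
    (tupleConcat_nonempty (Lk_nonempty N (k + 1)) (2 ^ ell N (k + 1) + 1))
  simp only [tupleConcat, Finset.mem_image, Finset.mem_product] at hu
  obtain ⟨⟨a, b⟩, ⟨ha, -⟩, rfl⟩ := hu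
  exact (cword_prefix_of_mem_Lk_succ ha).trans ((List.prefix_append a b).trans hpre)

lemma cword_prefix_of_le {j m : ℕ} (h : j ≤ m) : cword N j <+: cword N m := by
  induction m, h using Nat.le_induction with
  | base => exact List.prefix_refl _
  | succ m _ ih => exact ih.trans (cword_prefix_cword_succ m)

variable (N) in
/-- The common extension of the nested words `c_k`. -/
def limitPoint : Conf := fun n => (cword N n).getD n false

lemma limitPoint_eq_getElem {n m : ℕ} (hn : n < (cword N m).length) :
    limitPoint N n = (cword N m)[n] := by
  have hnn : n < (cword N n).length := (lt_ell n).trans (ell_lt_length_cword n)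
  rw [limitPoint, List.getD_eq_getElem _ _ hnn]
  rcases le_total n m with h | h
  · exact (cword_prefix_of_le h).getElem hnn
  · exact ((cword_prefix_of_le h).getElem hn).symm

lemma windowWord_limitPoint_mem (j r : ℕ) :
    windowWord (limitPoint N) (r * ell N j) (ell N j) ∈ Lk N j := by
  set m := max j ((r + 1) * ell N j)
  have hlen : (r + 1) * ell N j ≤ (cword N m).length :=
    ((le_max_right _ _).trans (lt_ell m).le).trans (ell_lt_length_cword m).le
  rw [windowWord_eq_take_drop (fun n hn => limitPoint_eq_getElem hn)
    (by linarith [add_mul r 1 (ell N j)])]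
  exact take_drop_mem_of_mem_kstar (ell_pos j) length_of_mem_Lk
    (antitone_kstar_wordLang_Lk (le_max_left j _) (cword_mem_kstar m)) hlen

variable (N) in
lemma limitPoint_mem_Xsub : limitPoint N ∈ Xsub N :=
  Set.mem_iInter.mpr fun _ =>
    ⟨0, limitPoint N, isConcat_of_windowWord_mem (ell_pos _) (windowWord_limitPoint_mem _), rfl⟩

lemma mapsTo_shiftMap_langShift (L : Finset (List Bool)) :
    Set.MapsTo shiftMap (langShift L) (langShift L) := by
  rintro _ ⟨n, z, hz, rfl⟩
  exact ⟨n + 1, z, hz, funext fun m => congrArg z (by omega)⟩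

variable (N) in
lemma mapsTo_shiftMap_Xsub : Set.MapsTo shiftMap (Xsub N) (Xsub N) := fun _ hx =>
  Set.mem_iInter.mpr fun k => mapsTo_shiftMap_langShift _ (Set.mem_iInter.mp hx k)

lemma mem_Yset_of_eqOn {k : ℕ} (hk : 1 ≤ k) {x y : Conf} (hy : y ∈ Xsub N)
    (h : ∀ j < 2 * ell N k, x j = y j) : x ∈ Yset N k := by
  obtain ⟨k, rfl⟩ := Nat.exists_eq_add_of_le' hk
  obtain ⟨i, hi, hmem⟩ := exists_windowWord_mem_of_mem_langShift (ell_pos _)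
    length_of_mem_Lk (Set.mem_iInter.mp hy k)
  refine ⟨i, hi, ?_⟩
  rwa [windowWord_congr fun j (hj : j < i + ell N (k + 1)) => h j (by omega)]

lemma phiX_Xsub_le_of_notMem_Yset {k : ℕ} (hk : 1 ≤ k) {x : Conf} (hx : x ∉ Yset N k) :
    phiX (Xsub N) x ≤ -(2 / 4 ^ ell N k) := by
  refine phiX_le_neg ⟨_, limitPoint_mem_Xsub N⟩ fun y hy => ?_
  obtain ⟨j, hj, hne⟩ : ∃ j < 2 * ell N k, x j ≠ y j := by
    by_contra! h
    exact hx (mem_Yset_of_eqOn hk hy h)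
  have hpow : (2 : ℝ) * 2 ^ j ≤ 4 ^ ell N k := by
    rw [← pow_succ', show (4 : ℝ) = 2 ^ 2 by norm_num, ← pow_mul]
    exact pow_le_pow_right₀ one_le_two (by omega)
  calc 2 / 4 ^ ell N k ≤ (2 ^ j)⁻¹ := by
        rw [div_le_iff₀ (by positivity), inv_mul_eq_div, le_div_iff₀ (by positivity)]
        linarith
    _ ≤ dist01 x y := inv_two_pow_le_dist01 hne

end LimitPoint

lemma measure_le_neg_phiX_lt {X : Set Conf} (hX : X.Nonempty) (μ : Measure Conf)
    [IsProbabilityMeasure μ] {ℓ : ℕ} (hμ : -1 ≤ 2 ^ (3 * ℓ) * ∫ x, phiX X x ∂μ) :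
    μ {x | 2 / 4 ^ ℓ ≤ -phiX X x} < ((2 : ℝ≥0∞) ^ ℓ)⁻¹ := by
  set m := μ.real {x | 2 / 4 ^ ℓ ≤ -phiX X x}
  have hMarkov : 2 / 4 ^ ℓ * m ≤ ∫ x, -phiX X x ∂μ :=
    mul_meas_ge_le_integral_of_nonneg (ae_of_all _ fun x => neg_nonneg.mpr (phiX_nonpos hX x))
      (integrable_of_continuous μ (continuous_phiX hX).neg) _
  have hm : 2 ^ ℓ * m < 1 := by
    have h8 : (2 : ℝ) ^ (3 * ℓ) = 2 ^ ℓ * 4 ^ ℓ := by rw [pow_mul, ← mul_pow]; norm_num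
    have hm0 : 0 ≤ 2 ^ ℓ * m := by positivity
    suffices 2 * (2 ^ ℓ * m) ≤ 1 by linarith
    calc 2 * (2 ^ ℓ * m) = 2 ^ ℓ * 4 ^ ℓ * (2 / 4 ^ ℓ * m) := by field_simp
      _ ≤ 2 ^ ℓ * 4 ^ ℓ * ∫ x, -phiX X x ∂μ := by gcongr
      _ ≤ 1 := by rw [integral_neg, ← h8]; linarith
  rw [← ofReal_measureReal, show ((2 : ℝ≥0∞) ^ ℓ)⁻¹ = ENNReal.ofReal ((2 ^ ℓ)⁻¹) by
    rw [ENNReal.ofReal_inv_of_pos (by positivity), ENNReal.ofReal_pow zero_le_two,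
      ENNReal.ofReal_ofNat]]
  rw [ENNReal.ofReal_lt_ofReal_iff (by positivity), ← one_div, lt_div_iff₀ (by positivity)]
  linarith

theorem stmt4_general (N : ℕ → ℕ) (k : ℕ) (hk : 1 ≤ k)
    (μ : Measure Conf)
    (hμ : IsEquilibriumState (phiX (Xsub N)) ((2 : ℝ) ^ (3 * ell N k)) μ) :
    1 - ((2 : ℝ≥0∞) ^ ell N k)⁻¹ < μ (Yset N k) := by
  have hX : (Xsub N).Nonempty := ⟨_, limitPoint_mem_Xsub N⟩
  have := hμ.1.1
  set S := {x | 2 / 4 ^ ell N k ≤ -phiX (Xsub N) x}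
  have hS : μ S < ((2 : ℝ≥0∞) ^ ell N k)⁻¹ := measure_le_neg_phiX_lt hX μ
    (neg_one_le_mul_integral_phiX (mapsTo_shiftMap_Xsub N) hX (by positivity) hμ)
  have hSY : Sᶜ ⊆ Yset N k := fun x hx => by_contra fun hY =>
    hx (le_neg_of_le_neg (phiX_Xsub_le_of_notMem_Yset hk hY))
  have hSmeas : MeasurableSet S :=
    measurableSet_le measurable_const (continuous_phiX hX).measurable.neg
  calc 1 - ((2 : ℝ≥0∞) ^ ell N k)⁻¹ < 1 - μ S :=
        (ENNReal.cancel_of_ne (ENNReal.sub_ne_top ENNReal.one_ne_top)).tsub_lt_tsub_left_of_le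
          (ENNReal.inv_le_one.mpr (one_le_pow₀ one_le_two)) hS
    _ = μ Sᶜ := (prob_compl_eq_one_sub hSmeas).symm
    _ ≤ μ (Yset N k) := measure_mono hSY

/-- For any parameter sequence `(N_k)` and any `k ≥ 1`, with
`β = 2^{3ℓ_k}`, every equilibrium state `μ` for `β φ_X` satisfies
`μ(Y_k) > 1 - 2^{-ℓ_k}`. -/
theorem stmt4 (N : ℕ → ℕ) (hN : ∀ k, 0 < N k) (k : ℕ) (hk : 1 ≤ k)
    (μ : Measure Conf)
    (hμ : IsEquilibriumState (phiX (Xsub N)) ((2 : ℝ) ^ (3 * ell N k)) μ) :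
    1 - ((2 : ℝ≥0∞) ^ ell N k)⁻¹ < μ (Yset N k) :=
  stmt4_general N k hk μ hμ

end
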